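/- arXiv:1210.0144 — 5 statements merged into one kernel-verified Lean document; each statement's English description precedes it below -/
import Mathlib

section
/- There exists ξ > √3·μ such that (ξ, 0) is an equilibrium point of the restricted four-body problem, i.e., ∂Ω/∂x(ξ,0) = 0 and ∂Ω/∂y(ξ,0) = 0 (this is the collinear equilibrium point L₂ lying on the positive x-axis beyond the primary m₁). -/
/-!
On the x-axis beyond `m₁`, `∂Ω/∂x (x, 0) = x - (1 - 2μ)/(x - √3 μ)² - h x`, where `h` collects
the pull of `m₂` and `m₃` and is continuous and bounded. Hence `∂Ω/∂x (·, 0)` tends to `-∞` at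
`(√3 μ)⁺` and to `+∞` at `+∞`, and the intermediate value theorem gives a zero `ξ`. Since `Ω` is
even in `y`, `∂Ω/∂y` vanishes on the whole x-axis.
-/

/-- Gravitational potential of the three primaries of the planar restricted four-body
problem with mass parameter `μ`: masses `1-2μ, μ, μ` at `(√3 μ, 0)`,
`(-√3(1-2μ)/2, -1/2)`, `(-√3(1-2μ)/2, 1/2)`. -/
noncomputable def U (μ x y : ℝ) : ℝ :=
  (1 - 2*μ) / Real.sqrt ((x - Real.sqrt 3 * μ)^2 + y^2)
  + μ / Real.sqrt ((x + Real.sqrt 3 * (1 - 2*μ)/2)^2 + (y + 1/2)^2)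
  + μ / Real.sqrt ((x + Real.sqrt 3 * (1 - 2*μ)/2)^2 + (y - 1/2)^2)

/-- Effective potential `Ω = (x²+y²)/2 + U`. -/
noncomputable def Omega (μ x y : ℝ) : ℝ := (x^2 + y^2)/2 + U μ x y

/-- Partial derivative `∂Ω/∂x`. -/
noncomputable def Omega_x (μ x y : ℝ) : ℝ := deriv (fun s => Omega μ s y) x

/-- Partial derivative `∂Ω/∂y`. -/
noncomputable def Omega_y (μ x y : ℝ) : ℝ := deriv (fun s => Omega μ x s) y

/-- `(x,y)` is the position of one of the three primaries. -/
def isPrimary (μ x y : ℝ) : Prop :=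
  (x = Real.sqrt 3 * μ ∧ y = 0) ∨
  (x = -(Real.sqrt 3 * (1 - 2*μ))/2 ∧ y = -(1/2)) ∨
  (x = -(Real.sqrt 3 * (1 - 2*μ))/2 ∧ y = 1/2)

open Filter Topology Set

lemma exists_gt_sub_div_sq_sub_eq_zero {a c M : ℝ} {h : ℝ → ℝ} (hc : 0 < c)
    (hh : Continuous h) (hM : ∀ x, h x ≤ M) :
    ∃ ξ, a < ξ ∧ ξ - c / (ξ - a) ^ 2 - h ξ = 0 := by
  set G : ℝ → ℝ := fun x => x - c / (x - a) ^ 2 - h x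
  have hcont : ContinuousOn G (Ioi a) := by
    intro x hx
    have : (x - a) ^ 2 ≠ 0 := pow_ne_zero _ (sub_ne_zero.2 (ne_of_gt hx))
    exact (by fun_prop (disch := assumption) : ContinuousAt G x).continuousWithinAt
  have hbot : Tendsto G (𝓝[>] a) atBot := by
    have hsq : Tendsto (fun x => (x - a) ^ 2) (𝓝[>] a) (𝓝[>] 0) := by
      refine tendsto_nhdsWithin_iff.2 ⟨?_, ?_⟩
      · have : Tendsto (fun x : ℝ => (x - a) ^ 2) (𝓝 a) (𝓝 ((a - a) ^ 2)) :=
          ((continuous_id.sub continuous_const).pow 2).tendsto a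
        simpa using this.mono_left nhdsWithin_le_nhds
      · filter_upwards [self_mem_nhdsWithin] with x (hx : a < x)
        exact pow_pos (sub_pos.2 hx) 2
    have hpole : Tendsto (fun x => c / (x - a) ^ 2) (𝓝[>] a) atTop := by
      simpa [div_eq_mul_inv] using (tendsto_inv_nhdsGT_zero.comp hsq).const_mul_atTop hc
    have hreg : Tendsto (fun x => x - h x) (𝓝[>] a) (𝓝 (a - h a)) :=
      ((continuous_id.sub hh).tendsto a).mono_left nhdsWithin_le_nhds
    refine (hreg.add_atBot (tendsto_neg_atTop_atBot.comp hpole)).congr fun x => ?_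
    simp only [G, Function.comp]; ring
  have htop : Tendsto G atTop atTop := by
    have hdecay : Tendsto (fun x => c / (x - a) ^ 2) atTop (𝓝 0) :=
      tendsto_const_nhds.div_atTop
        ((tendsto_pow_atTop two_ne_zero).comp (tendsto_atTop_add_const_right _ (-a) tendsto_id))
    have := tendsto_atTop_add_right_of_le _ (-M) (tendsto_id.atTop_add hdecay.neg)
      fun x => neg_le_neg (hM x)
    simpa [G, sub_eq_add_neg, add_assoc] using this
  obtain ⟨ξ, hξ, hGξ⟩ := isPreconnected_Ioi.intermediate_value_Iii (l₁ := 𝓝[>] a)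
    inf_le_right (le_principal_iff.2 (Ioi_mem_atTop a)) hcont hbot htop (mem_univ 0)
  exact ⟨ξ, hξ, hGξ⟩

lemma HasDerivAt.const_div_sqrt_sq_add {f : ℝ → ℝ} {f' x : ℝ} (hf : HasDerivAt f f' x)
    (m q : ℝ) (hpos : 0 < f x ^ 2 + q) :
    HasDerivAt (fun s => m / √(f s ^ 2 + q)) (-(m * f x * f') / √(f x ^ 2 + q) ^ 3) x := by
  have hr : HasDerivAt (fun s => √(f s ^ 2 + q)) (2 * f x * f' / (2 * √(f x ^ 2 + q))) x := by
    simpa using ((hf.pow 2).add_const q).sqrt hpos.ne'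
  have hr0 : 0 < √(f x ^ 2 + q) := Real.sqrt_pos.2 hpos
  refine ((hasDerivAt_const x m).div hr hr0.ne').congr_deriv ?_
  field_simp
  simp

lemma abs_div_sqrt_sq_add_pow_three_le {q : ℝ} (hq : 0 < q) (t : ℝ) :
    |t| / √(t ^ 2 + q) ^ 3 ≤ 1 / q := by
  set r := √(t ^ 2 + q)
  have hr : 0 < r := Real.sqrt_pos.2 (by positivity)
  have hr2 : r ^ 2 = t ^ 2 + q := Real.sq_sqrt (by positivity)
  have ht : |t| ≤ r := Real.abs_le_sqrt (by linarith [sq_nonneg t])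
  calc |t| / r ^ 3 ≤ r / r ^ 3 := by gcongr
    _ = 1 / (t ^ 2 + q) := by rw [← hr2]; field_simp
    _ ≤ 1 / q := by gcongr; linarith [sq_nonneg t]

lemma mul_div_sqrt_sq_add_pow_three_le {q : ℝ} (hq : 0 < q) (m t : ℝ) :
    m * t / √(t ^ 2 + q) ^ 3 ≤ |m| / q :=
  calc m * t / √(t ^ 2 + q) ^ 3 ≤ |m * t / √(t ^ 2 + q) ^ 3| := le_abs_self _
    _ = |m| * (|t| / √(t ^ 2 + q) ^ 3) := by
      rw [abs_div, abs_mul, abs_of_pos (a := √(t ^ 2 + q) ^ 3) (by positivity)]; ring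
    _ ≤ |m| * (1 / q) :=
      mul_le_mul_of_nonneg_left (abs_div_sqrt_sq_add_pow_three_le hq t) (abs_nonneg m)
    _ = |m| / q := by ring

lemma continuous_mul_div_sqrt_sq_add_pow_three {q : ℝ} (hq : 0 < q) (m b : ℝ) :
    Continuous fun x => m * (x + b) / √((x + b) ^ 2 + q) ^ 3 := by
  have : ∀ x, √((x + b) ^ 2 + q) ^ 3 ≠ 0 := fun x => by positivity
  fun_prop (disch := exact this _)

lemma deriv_zero_of_even {f : ℝ → ℝ} (hf : ∀ s, f (-s) = f s) : deriv f 0 = 0 := by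
  have h := deriv_comp_neg f (0 : ℝ)
  rw [funext hf, neg_zero] at h
  linarith

lemma Omega_neg_right (μ x y : ℝ) : Omega μ x (-y) = Omega μ x y := by
  simp only [Omega, U]
  rw [neg_sq, show (-y + 1/2) ^ 2 = (y - 1/2) ^ 2 by ring,
    show (-y - 1/2) ^ 2 = (y + 1/2) ^ 2 by ring]
  ring

lemma hasDerivAt_Omega_axis {μ x : ℝ} (hx : √3 * μ < x) :
    HasDerivAt (fun s => Omega μ s 0)
      (x - (1 - 2 * μ) / (x - √3 * μ) ^ 2
        - 2 * μ * (x + √3 * (1 - 2 * μ) / 2)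
          / √((x + √3 * (1 - 2 * μ) / 2) ^ 2 + 1 / 4) ^ 3) x := by
  have hd₁ : HasDerivAt (fun s => s - √3 * μ) 1 x := (hasDerivAt_id x).sub_const _
  have hd₂ : HasDerivAt (fun s => s + √3 * (1 - 2 * μ) / 2) 1 x :=
    (hasDerivAt_id x).add_const _
  have hΩ := ((((hasDerivAt_pow 2 x).add_const (0 ^ 2 : ℝ)).div_const 2).add
    (hd₁.const_div_sqrt_sq_add (1 - 2 * μ) (0 ^ 2) (by nlinarith))).add
    (hd₂.const_div_sqrt_sq_add μ ((0 + 1 / 2) ^ 2) (by positivity)) |>.add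
    (hd₂.const_div_sqrt_sq_add μ ((0 - 1 / 2) ^ 2) (by positivity))
  refine (hΩ.congr_deriv ?_).congr_of_eventuallyEq (Eventually.of_forall fun s => ?_)
  · have hx' : 0 < x - √3 * μ := sub_pos.2 hx
    rw [show (x - √3 * μ) ^ 2 + 0 ^ 2 = (x - √3 * μ) ^ 2 by ring, Real.sqrt_sq hx'.le,
      show ((0 : ℝ) + 1 / 2) ^ 2 = 1 / 4 by norm_num,
      show ((0 : ℝ) - 1 / 2) ^ 2 = 1 / 4 by norm_num]
    simp only [Nat.cast_ofNat, Nat.add_one_sub_one, pow_one]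
    field_simp [hx'.ne']
    ring
  · simp only [Omega, U, Pi.add_apply]
    ring

theorem stmt_6_general (μ : ℝ) (hμ1 : μ < 1/2) :
    ∃ ξ : ℝ, Real.sqrt 3 * μ < ξ ∧ Omega_x μ ξ 0 = 0 ∧ Omega_y μ ξ 0 = 0 := by
  obtain ⟨ξ, hξ, hroot⟩ := exists_gt_sub_div_sq_sub_eq_zero (a := √3 * μ) (c := 1 - 2 * μ)
    (by linarith)
    (continuous_mul_div_sqrt_sq_add_pow_three (q := 1 / 4) (by norm_num) (2 * μ) _)
    fun x => mul_div_sqrt_sq_add_pow_three_le (q := 1 / 4) (by norm_num) (2 * μ) _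
  exact ⟨ξ, hξ, (hasDerivAt_Omega_axis hξ).deriv.trans hroot,
    deriv_zero_of_even (Omega_neg_right μ ξ)⟩

/-- There exists `ξ > √3 μ` such that `(ξ, 0)` is an equilibrium point of
the restricted four-body problem: `∂Ω/∂x(ξ,0) = 0` and `∂Ω/∂y(ξ,0) = 0` (the collinear
equilibrium point `L₂` on the positive x-axis beyond the primary `m₁`). -/
theorem stmt_6 (μ : ℝ) (hμ0 : 0 < μ) (hμ1 : μ < 1/2) :
    ∃ ξ : ℝ, Real.sqrt 3 * μ < ξ ∧ Omega_x μ ξ 0 = 0 ∧ Omega_y μ ξ 0 = 0 :=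
  stmt_6_general μ hμ1
end

section
/- Let a, b ∈ ℝ and ω ≠ 0 satisfy the resonance conditions a + b = 2 − 2ω² and ab + a + b + 1 = ω⁴ (so that the characteristic polynomial λ⁴+(2−a−b)λ²+(ab+a+b+1) equals (λ²+ω²)²). Let N = (1/(2ω²)) times the matrix with rows (0, −(ω²+2b+a−1), −(ω²+a−3), 0), (ω²+2a+b−1, 0, 0, −(ω²+b−3)), (−(a²−b+a(ω²−2)), 0, 0, −(ω²+2a+b−1)), (0, a−b(ω²+b−2), ω²+2b+a−1, 0). Then N² = 0. -/
/-!
The resonance conditions say that `a` and `b` are the roots of `t² - (2 - 2ω²) t + ω⁴ + 2ω² - 3`,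
whose discriminant is `16 (1 - ω²)`; with `s = (a - b) / 4` they become `a = s² + 2s`,
`b = s² - 2s`, `ω² = 1 - s²`. In terms of `s` the matrix (without its scalar factor) is
`p ⊗ x + q ⊗ y` for two pairs of vectors with `x, y` orthogonal to `p, q`, so its image lies in
its kernel and its square vanishes.
-/

open Matrix

theorem Matrix.vecMulVec_add_vecMulVec_mul_self_eq_zero {R ι : Type*} [NonUnitalSemiring R]
    [Fintype ι] {p q x y : ι → R} (hxp : x ⬝ᵥ p = 0) (hxq : x ⬝ᵥ q = 0)
    (hyp : y ⬝ᵥ p = 0) (hyq : y ⬝ᵥ q = 0) :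
    (vecMulVec p x + vecMulVec q y) * (vecMulVec p x + vecMulVec q y) = 0 := by
  simp only [add_mul, mul_add, vecMulVec_mul_vecMulVec, hxp, hxq, hyp, hyq, zero_smul,
    vecMulVec_zero, add_zero]

theorem exists_param_of_resonance {K : Type*} [Field K] [CharZero K] {a b ω : K}
    (hres1 : a + b = 2 - 2 * ω ^ 2) (hres2 : a * b + a + b + 1 = ω ^ 4) :
    ∃ s : K, a = s ^ 2 + 2 * s ∧ b = s ^ 2 - 2 * s ∧ ω ^ 2 = 1 - s ^ 2 := by
  have hω : ω ^ 2 = 1 - ((a - b) / 4) ^ 2 := by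
    linear_combination ((a + b + 2 - 2 * ω ^ 2) / 16 + 1 / 4) * hres1 - hres2 / 4
  refine ⟨(a - b) / 4, ?_, ?_, hω⟩ <;> linear_combination hres1 / 2 - hω

theorem stmt_12_general (a b ω : ℝ)
    (hres1 : a + b = 2 - 2*ω^2) (hres2 : a*b + a + b + 1 = ω^4) :
    ((1/(2*ω^2)) •
        !![0, -(ω^2 + 2*b + a - 1), -(ω^2 + a - 3), 0;
           ω^2 + 2*a + b - 1, 0, 0, -(ω^2 + b - 3);
           -(a^2 - b + a*(ω^2 - 2)), 0, 0, -(ω^2 + 2*a + b - 1);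
           0, a - b*(ω^2 + b - 2), ω^2 + 2*b + a - 1, 0] : Matrix (Fin 4) (Fin 4) ℝ) *
    ((1/(2*ω^2)) •
        !![0, -(ω^2 + 2*b + a - 1), -(ω^2 + a - 3), 0;
           ω^2 + 2*a + b - 1, 0, 0, -(ω^2 + b - 3);
           -(a^2 - b + a*(ω^2 - 2)), 0, 0, -(ω^2 + 2*a + b - 1);
           0, a - b*(ω^2 + b - 2), ω^2 + 2*b + a - 1, 0]) = 0 := by
  obtain ⟨s, rfl, rfl, hω⟩ := exists_param_of_resonance hres1 hres2
  rw [Matrix.smul_mul, Matrix.mul_smul, hω]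
  refine smul_eq_zero_of_right _ (smul_eq_zero_of_right _ ?_)
  refine (congrArg (fun N : Matrix (Fin 4) (Fin 4) ℝ ↦ N * N) ?_).trans
    (vecMulVec_add_vecMulVec_mul_self_eq_zero (p := ![2 * (1 - s), 0, 0, 2 * s * (s - 1)])
      (x := ![0, s, 1, 0]) (q := ![0, 2 * (s + 1), -2 * s * (s + 1), 0]) (y := ![s, 0, 0, 1])
      ?_ ?_ ?_ ?_)
  · ext i j
    fin_cases i <;> fin_cases j <;>
      simp only [Matrix.add_apply, vecMulVec_apply, of_apply, cons_val, cons_val_zero,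
        cons_val_one, Fin.zero_eta, Fin.mk_one, Fin.reduceFinMk] <;>
      ring
  all_goals simp only [cons_dotProduct_cons, dotProduct_of_isEmpty]; ring

/-- Under the resonance conditions `a + b = 2 - 2ω²` and
`ab + a + b + 1 = ω⁴` (so the characteristic polynomial is `(λ² + ω²)²`), the nilpotent
part `N` of the decomposition `A = Σ + N` satisfies `N² = 0`. -/
theorem stmt_12 (a b ω : ℝ) (hω : ω ≠ 0)
    (hres1 : a + b = 2 - 2*ω^2) (hres2 : a*b + a + b + 1 = ω^4) :
    ((1/(2*ω^2)) •
        !![0, -(ω^2 + 2*b + a - 1), -(ω^2 + a - 3), 0;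
           ω^2 + 2*a + b - 1, 0, 0, -(ω^2 + b - 3);
           -(a^2 - b + a*(ω^2 - 2)), 0, 0, -(ω^2 + 2*a + b - 1);
           0, a - b*(ω^2 + b - 2), ω^2 + 2*b + a - 1, 0] : Matrix (Fin 4) (Fin 4) ℝ) *
    ((1/(2*ω^2)) •
        !![0, -(ω^2 + 2*b + a - 1), -(ω^2 + a - 3), 0;
           ω^2 + 2*a + b - 1, 0, 0, -(ω^2 + b - 3);
           -(a^2 - b + a*(ω^2 - 2)), 0, 0, -(ω^2 + 2*a + b - 1);
           0, a - b*(ω^2 + b - 2), ω^2 + 2*b + a - 1, 0]) = 0 :=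
  stmt_12_general a b ω hres1 hres2
end

section
/- Let ω > 0 and let B be the 4×4 matrix with rows (0,−ω,0,0), (ω,0,0,0), (−1,0,0,−ω), (0,−1,ω,0) (the normal form with ε = −1), and let J₄ be the standard 4×4 symplectic matrix. Define the quadratic Hamiltonian H(z) = ½ zᵀ(−J₄B)z, so that the linear Hamiltonian vector field of H is ż = Bz. Then under the symplectic polar substitution z₁ = r cos θ, z₂ = r sin θ, z₃ = R cos θ − (Θ/r) sin θ, z₄ = R sin θ + (Θ/r) cos θ (with r ≠ 0), one has H = ωΘ + ½ r². -/
/-!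
Since `J₄² = -1`, the matrix `S = -J₄B` satisfies `J₄S = B`. Explicitly
`H(z) = ½(z₁² + z₂²) + ω(z₁z₄ - z₂z₃)`, and in symplectic polar coordinates `z₁² + z₂² = r²`
while the angular momentum `z₁z₄ - z₂z₃` equals `Θ`.
-/

open Matrix

theorem mul_neg_mul_cancel_of_mul_self_eq_neg_one {α : Type*} [Ring α] {J : α}
    (hJ : J * J = -1) (B : α) : J * -(J * B) = B := by
  rw [mul_neg, ← mul_assoc, hJ, neg_one_mul, neg_neg]

theorem symplectic_four_mul_self :
    !![0, 0, 1, 0; 0, 0, 0, 1; -1, 0, 0, 0; 0, -1, 0, 0] *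
      !![0, 0, 1, 0; 0, 0, 0, 1; -1, 0, 0, 0; 0, -1, 0, 0] = (-1 : Matrix (Fin 4) (Fin 4) ℝ) := by
  ext i j
  fin_cases i <;> fin_cases j <;> simp [mul_apply, Fin.sum_univ_four, one_apply]

theorem neg_symplectic_four_mul_normalForm (ω : ℝ) :
    -(!![0, 0, 1, 0; 0, 0, 0, 1; -1, 0, 0, 0; 0, -1, 0, 0] *
        !![0, -ω, 0, 0; ω, 0, 0, 0; -1, 0, 0, -ω; 0, -1, ω, 0]) =
      !![1, 0, 0, ω; 0, 1, -ω, 0; 0, -ω, 0, 0; ω, 0, 0, 0] := by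
  ext i j
  fin_cases i <;> fin_cases j <;> simp

theorem dotProduct_mulVec_normalForm_hamiltonian (ω : ℝ) (z : Fin 4 → ℝ) :
    z ⬝ᵥ (!![1, 0, 0, ω; 0, 1, -ω, 0; 0, -ω, 0, 0; ω, 0, 0, 0] *ᵥ z) =
      (z 0 ^ 2 + z 1 ^ 2) + 2 * ω * (z 0 * z 3 - z 1 * z 2) := by
  simp only [dotProduct, mulVec, of_apply, cons_val', cons_val_fin_one, Fin.sum_univ_four,
    cons_val_zero, cons_val_one, cons_val]
  ring

section SymplecticPolar

variable (r θ R Θ : ℝ)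

noncomputable def symplecticPolar : Fin 4 → ℝ :=
  ![r * Real.cos θ, r * Real.sin θ,
    R * Real.cos θ - (Θ / r) * Real.sin θ,
    R * Real.sin θ + (Θ / r) * Real.cos θ]

theorem symplecticPolar_sq_add_sq :
    symplecticPolar r θ R Θ 0 ^ 2 + symplecticPolar r θ R Θ 1 ^ 2 = r ^ 2 := by
  simp only [symplecticPolar, cons_val_zero, cons_val_one]
  linear_combination r ^ 2 * Real.sin_sq_add_cos_sq θ

theorem symplecticPolar_angularMomentum (hr : r ≠ 0) :
    symplecticPolar r θ R Θ 0 * symplecticPolar r θ R Θ 3 -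
      symplecticPolar r θ R Θ 1 * symplecticPolar r θ R Θ 2 = Θ := by
  simp only [symplecticPolar, cons_val]
  field_simp
  linear_combination Θ * Real.sin_sq_add_cos_sq θ

end SymplecticPolar

theorem stmt_14_general (ω : ℝ)
    (B J : Matrix (Fin 4) (Fin 4) ℝ)
    (hB : B = !![0, -ω, 0, 0; ω, 0, 0, 0; -1, 0, 0, -ω; 0, -1, ω, 0])
    (hJ : J = !![0, 0, 1, 0; 0, 0, 0, 1; -1, 0, 0, 0; 0, -1, 0, 0]) :
    J * (-(J * B)) = B ∧
    ∀ r θ R Θ : ℝ, r ≠ 0 →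
      (1/2) * (dotProduct
        ![r * Real.cos θ, r * Real.sin θ,
          R * Real.cos θ - (Θ/r) * Real.sin θ,
          R * Real.sin θ + (Θ/r) * Real.cos θ]
        ((-(J * B)).mulVec
          ![r * Real.cos θ, r * Real.sin θ,
            R * Real.cos θ - (Θ/r) * Real.sin θ,
            R * Real.sin θ + (Θ/r) * Real.cos θ])) = ω * Θ + (1/2) * r^2 := by
  subst hB hJ
  refine ⟨mul_neg_mul_cancel_of_mul_self_eq_neg_one symplectic_four_mul_self _, ?_⟩
  intro r θ R Θ hr
  change (1 / 2) * (symplecticPolar r θ R Θ ⬝ᵥ (_ *ᵥ symplecticPolar r θ R Θ)) = _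
  rw [neg_symplectic_four_mul_normalForm, dotProduct_mulVec_normalForm_hamiltonian,
    symplecticPolar_sq_add_sq, symplecticPolar_angularMomentum r θ R Θ hr]
  ring

/-- For the normal form `B` (case `ε = -1`) and the standard symplectic
matrix `J₄ = [[0, I₂], [-I₂, 0]]`, the quadratic Hamiltonian `H(z) = ½ zᵀ(-J₄B)z`
(whose linear Hamiltonian vector field is `ż = Bz`, i.e. `J₄·(-J₄B) = B`) becomes
`H = ωΘ + ½r²` in symplectic polar coordinates `z₁ = r cos θ`, `z₂ = r sin θ`,
`z₃ = R cos θ - (Θ/r) sin θ`, `z₄ = R sin θ + (Θ/r) cos θ` (for `r ≠ 0`). -/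
theorem stmt_14 (ω : ℝ) (hω : 0 < ω)
    (B J : Matrix (Fin 4) (Fin 4) ℝ)
    (hB : B = !![0, -ω, 0, 0; ω, 0, 0, 0; -1, 0, 0, -ω; 0, -1, ω, 0])
    (hJ : J = !![0, 0, 1, 0; 0, 0, 0, 1; -1, 0, 0, 0; 0, -1, 0, 0]) :
    J * (-(J * B)) = B ∧
    ∀ r θ R Θ : ℝ, r ≠ 0 →
      (1/2) * (dotProduct
        ![r * Real.cos θ, r * Real.sin θ,
          R * Real.cos θ - (Θ/r) * Real.sin θ,
          R * Real.sin θ + (Θ/r) * Real.cos θ]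
        ((-(J * B)).mulVec
          ![r * Real.cos θ, r * Real.sin θ,
            R * Real.cos θ - (Θ/r) * Real.sin θ,
            R * Real.sin θ + (Θ/r) * Real.cos θ])) = ω * Θ + (1/2) * r^2 :=
  stmt_14_general ω B J hB hJ
end

section
/- Let ν₁, ν₂ ∈ ℝ and let B_ν be the 4×4 matrix with rows (0, −(1+ν₁), ν₂, 0), (1+ν₁, 0, 0, ν₂), (−1, 0, 0, −(1+ν₁)), (0, −1, 1+ν₁, 0). Then the characteristic polynomial of B_ν is P(λ) = λ⁴ + 2[(1+ν₁)² + ν₂]λ² + [(1+ν₁)² − ν₂]². -/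
open Polynomial

def versalDeformation {R : Type*} [CommRing R] (ν₁ ν₂ : R) : Matrix (Fin 4) (Fin 4) R :=
  !![0, -(1 + ν₁), ν₂, 0;
     1 + ν₁, 0, 0, ν₂;
     -1, 0, 0, -(1 + ν₁);
     0, -1, 1 + ν₁, 0]

section

variable {R : Type*} [CommRing R] (ν₁ ν₂ : R)

theorem charmatrix_versalDeformation :
    (versalDeformation ν₁ ν₂).charmatrix =
      !![X, C (1 + ν₁), -C ν₂, 0;
         -C (1 + ν₁), X, 0, -C ν₂;
         1, 0, X, C (1 + ν₁);
         0, 1, -C (1 + ν₁), X] := by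
  ext i j
  fin_cases i <;> fin_cases j <;> simp [versalDeformation]

theorem charpoly_versalDeformation :
    (versalDeformation ν₁ ν₂).charpoly =
      X ^ 4 + C (2 * ((1 + ν₁) ^ 2 + ν₂)) * X ^ 2 + C (((1 + ν₁) ^ 2 - ν₂) ^ 2) := by
  rw [Matrix.charpoly, charmatrix_versalDeformation, Matrix.det_succ_row_zero]
  simp [Fin.sum_univ_succ, Matrix.det_fin_three, Fin.succAbove, map_ofNat C]
  ring

end

/-- The characteristic polynomial of the versal deformation `B_ν`, the
matrix with rows `(0, -(1+ν₁), ν₂, 0), (1+ν₁, 0, 0, ν₂), (-1, 0, 0, -(1+ν₁)),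
(0, -1, 1+ν₁, 0)`, is `λ⁴ + 2[(1+ν₁)² + ν₂]λ² + [(1+ν₁)² - ν₂]²`. -/
theorem stmt_17 (ν₁ ν₂ : ℝ) :
    Matrix.charpoly (!![0, -(1+ν₁), ν₂, 0;
                        1+ν₁, 0, 0, ν₂;
                        -1, 0, 0, -(1+ν₁);
                        0, -1, 1+ν₁, 0]) =
      X^4 + C (2*((1+ν₁)^2 + ν₂)) * X^2 + C (((1+ν₁)^2 - ν₂)^2) :=
  charpoly_versalDeformation ν₁ ν₂
end

section
/- Let a, b ∈ ℝ satisfy a+b+ab+1 ≥ 0 and 1/2 − (a+b)/4 + (1/2)√(a+b+ab+1) ≥ 0. Define ν₂ = 1/2 − (a+b)/4 − (1/2)√(a+b+ab+1) and ν₁ = √(1/2 − (a+b)/4 + (1/2)√(a+b+ab+1)) − 1. Then (1+ν₁)² = 1 − (a+b)/2 − ν₂, 2[(1+ν₁)² + ν₂] = 2 − a − b, and [(1+ν₁)² − ν₂]² = a + b + ab + 1; consequently the characteristic polynomial λ⁴ + 2[(1+ν₁)²+ν₂]λ² + [(1+ν₁)²−ν₂]² of the versal deformation B_ν coincides with the characteristic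 polynomial λ⁴ + (2−a−b)λ² + (ab+a+b+1) of the linearized restricted four-body problem at the collinear equilibrium. -/
/-! With `c = 1/2 - (a+b)/4` and `D = a + b + ab + 1`, the numbers `(1+ν₁)²` and `ν₂` are
`c + √D/2` and `c - √D/2`: their sum is `2c = 1 - (a+b)/2` and their difference is `√D`,
whose square is `D`. -/

open Polynomial

/-- With `ν₂ = 1/2 - (a+b)/4 - ½√(a+b+ab+1)` and
`ν₁ = √(1/2 - (a+b)/4 + ½√(a+b+ab+1)) - 1`, one has `(1+ν₁)² = 1 - (a+b)/2 - ν₂`,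
`2[(1+ν₁)² + ν₂] = 2 - a - b` and `[(1+ν₁)² - ν₂]² = a + b + ab + 1`; hence the
characteristic polynomial of the versal deformation `B_ν` coincides with that of the
linearized restricted four-body problem at the collinear equilibrium. -/
theorem stmt_18 (a b : ℝ)
    (h1 : 0 ≤ a + b + a*b + 1)
    (h2 : 0 ≤ 1/2 - (a+b)/4 + (1/2) * Real.sqrt (a + b + a*b + 1))
    (ν₁ ν₂ : ℝ)
    (hν₂ : ν₂ = 1/2 - (a+b)/4 - (1/2) * Real.sqrt (a + b + a*b + 1))
    (hν₁ : ν₁ = Real.sqrt (1/2 - (a+b)/4 + (1/2) * Real.sqrt (a + b + a*b + 1)) - 1) :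
    (1 + ν₁)^2 = 1 - (a+b)/2 - ν₂ ∧
    2 * ((1 + ν₁)^2 + ν₂) = 2 - a - b ∧
    ((1 + ν₁)^2 - ν₂)^2 = a + b + a*b + 1 ∧
    (X^4 + C (2*((1+ν₁)^2 + ν₂)) * X^2 + C (((1+ν₁)^2 - ν₂)^2) : ℝ[X]) =
      X^4 + C (2 - a - b) * X^2 + C (a + b + a*b + 1) := by
  have hsq : (1 + ν₁)^2 = 1/2 - (a+b)/4 + (1/2) * Real.sqrt (a + b + a*b + 1) := by
    rw [hν₁, add_sub_cancel, Real.sq_sqrt h2]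
  have hsum : (1 + ν₁)^2 + ν₂ = 1 - (a+b)/2 := by rw [hsq, hν₂]; ring
  have hdiff : (1 + ν₁)^2 - ν₂ = Real.sqrt (a + b + a*b + 1) := by rw [hsq, hν₂]; ring
  have hcoeff₂ : 2 * ((1 + ν₁)^2 + ν₂) = 2 - a - b := by rw [hsum]; ring
  have hcoeff₀ : ((1 + ν₁)^2 - ν₂)^2 = a + b + a*b + 1 := by rw [hdiff, Real.sq_sqrt h1]
  exact ⟨by linarith, hcoeff₂, hcoeff₀, by rw [hcoeff₂, hcoeff₀]⟩
end
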